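/- Let k ≥ 0 and t ≥ 0 be natural numbers with 2t < 2^k (equivalently, t < 2^{k−1} when k ≥ 1, and t = 0 when k = 0), and set s = 2^{k+1} − (2t + 1), an odd number with ⌊log₂ s⌋ = k. Then for every m ≥ 0, the equality c(2m + 1 + s) + c(2m + 1) + s = c(4m + 2 + s) holds if and only if either m = 2^k · p + t for some p ≥ 1, or s = 1 and m = 0. -/
import Mathlib

/-- The Colless index of the maximally balanced bifurcating tree with `n` leaves:
`c 1 = 0` and `c n = c ⌈n/2⌉ + c ⌊n/2⌋ + (⌈n/2⌉ - ⌊n/2⌋)` for `n ≥ 2`. -/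
def c : ℕ → ℕ
  | 0 => 0
  | 1 => 0
  | n + 2 => c ((n + 3) / 2) + c ((n + 2) / 2) + ((n + 3) / 2 - (n + 2) / 2)
decreasing_by all_goals omega
lemma c_rec (n : ℕ) : c (n+2) = c ((n + 3) / 2) + c ((n + 2) / 2) + ((n + 3) / 2 - (n + 2) / 2) := by
  rw [c]
lemma c_double (n : ℕ) : c (2*n) = 2 * c n := by
  rcases n with _ | _ | m
  · simp [c]
  · rw [show (2:ℕ)*1 = 0+2 by norm_num, c_rec]; simp [c]
  · rw [show 2*(m+1+1) = (2*m+2)+2 by ring, c_rec,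
      show (2*m+2+3)/2 = m+1+1 by omega, show (2*m+2+2)/2 = m+1+1 by omega]
    omega
lemma c_odd (n : ℕ) (hn : 1 ≤ n) : c (2*n+1) = c (n+1) + c n + 1 := by
  rw [show 2*n+1 = (2*n-1)+2 by omega, c_rec,
    show (2*n-1+3)/2 = n+1 by omega, show (2*n-1+2)/2 = n by omega]
  omega
lemma cL1 : ∀ N n : ℕ, n ≤ N → 1 ≤ n → c (n+1) + 1 ≤ c n + n := by
  intro N
  induction N with
  | zero => intro n h h1; omega
  | succ N ih =>
    intro n hn h1
    rcases Nat.lt_or_ge n 2 with h2 | h2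
    · rw [show n = 1 by omega]
      rw [show (1:ℕ)+1 = 0+2 by norm_num, c_rec]; simp [c]
    rcases Nat.even_or_odd n with hq | hq
    · obtain ⟨q, hq⟩ := hq
      have hq' : n = 2*q := by omega
      subst hq'
      have hq1 : 1 ≤ q := by omega
      have e1 : c (2*q+1) = c (q+1) + c q + 1 := c_odd q hq1
      have e2 : c (2*q) = 2 * c q := c_double q
      have ihq := ih q (by omega) hq1
      omega
    · obtain ⟨q, hq⟩ := hq
      subst hq
      have hq1 : 1 ≤ q := by omega
      have e1 : c (2*q+1) = c (q+1) + c q + 1 := c_odd q hq1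
      have e2 : c (2*(q+1)) = 2 * c (q+1) := c_double (q+1)
      have ihq := ih q (by omega) hq1
      rw [show 2*q+1+1 = 2*(q+1) by ring]
      omega
lemma cL1' (n : ℕ) (h : 1 ≤ n) : c (n+1) + 1 ≤ c n + n := cL1 n n le_rfl h
lemma cL2 (n : ℕ) (h : 3 ≤ n) : c (n+1) + 2 ≤ c n + n := by
  rcases Nat.even_or_odd n with hq | hq
  · obtain ⟨q, hq⟩ := hq
    have hq' : n = 2*q := by omega
    subst hq'
    have hq1 : 2 ≤ q := by omega
    have e1 : c (2*q+1) = c (q+1) + c q + 1 := c_odd q (by omega)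
    have e2 : c (2*q) = 2 * c q := c_double q
    have h1 := cL1' q (by omega)
    omega
  · obtain ⟨q, hq⟩ := hq
    subst hq
    have hq1 : 1 ≤ q := by omega
    have e1 : c (2*q+1) = c (q+1) + c q + 1 := c_odd q hq1
    have e2 : c (2*(q+1)) = 2 * c (q+1) := c_double (q+1)
    have h1 := cL1' q hq1
    rw [show 2*q+1+1 = 2*(q+1) by ring]
    omega
lemma c_one : c 1 = 0 := by simp [c]
lemma cA : ∀ N a b : ℕ, a + b ≤ N → 1 ≤ b → b ≤ a → c (a+b) + b ≤ c a + c b + a := by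
  intro N
  induction N with
  | zero => intro a b h hb hba; omega
  | succ N ih =>
    intro a b hN hb hba
    rcases Nat.eq_or_lt_of_le hb with hb1 | hb2
    · -- b = 1
      rw [← hb1, c_one]
      have := cL1' a (by omega)
      omega
    rcases Nat.eq_or_lt_of_le hba with hab | hab
    · -- a = b
      subst hab
      rw [show b + b = 2*b by ring, c_double]
      omega
    -- b ≥ 2, a ≥ b+1
    rcases Nat.even_or_odd a with ⟨a', ha⟩ | ⟨a', ha⟩ <;>
      rcases Nat.even_or_odd b with ⟨b', hbb⟩ | ⟨b', hbb⟩
    · -- a = 2a', b = 2b'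
      have ha' : a = 2*a' := by omega
      have hb' : b = 2*b' := by omega
      clear ha hbb; subst ha'; subst hb'
      rw [show 2*a' + 2*b' = 2*(a'+b') by ring, c_double, c_double, c_double]
      have IH := ih a' b' (by omega) (by omega) (by omega)
      omega
    · -- a = 2a', b = 2b'+1, b' ≥ 1, a' ≥ b'+1
      have ha' : a = 2*a' := by omega
      clear ha; subst ha'; subst hbb
      have hb1 : 1 ≤ b' := by omega
      have hab' : b'+1 ≤ a' := by omega
      rw [show 2*a' + (2*b'+1) = 2*(a'+b')+1 by ring, c_odd _ (by omega), c_double,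
        c_odd b' hb1]
      have IH1 := ih a' (b'+1) (by omega) (by omega) (by omega)
      rw [show a' + (b'+1) = a'+b'+1 by ring] at IH1
      have IH2 := ih a' b' (by omega) (by omega) (by omega)
      omega
    · -- a = 2a'+1, b = 2b', a' ≥ b' ≥ 1
      have hb' : b = 2*b' := by omega
      clear hbb; subst ha; subst hb'
      have hb1 : 1 ≤ b' := by omega
      have hab' : b' ≤ a' := by omega
      rw [show 2*a'+1 + 2*b' = 2*(a'+b')+1 by ring, c_odd _ (by omega), c_double,
        c_odd a' (by omega)]
      have IH1 := ih (a'+1) b' (by omega) (by omega) (by omega)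
      rw [show a'+1 + b' = a'+b'+1 by ring] at IH1
      have IH2 := ih a' b' (by omega) (by omega) (by omega)
      omega
    · -- a = 2a'+1, b = 2b'+1, a' ≥ b'+1, b' ≥ 1
      subst ha; subst hbb
      have hb1 : 1 ≤ b' := by omega
      have hab' : b'+1 ≤ a' := by omega
      rw [show 2*a'+1 + (2*b'+1) = 2*(a'+b'+1) by ring, c_double,
        c_odd a' (by omega), c_odd b' hb1]
      have IH1 := ih (a'+1) b' (by omega) (by omega) (by omega)
      rw [show a'+1 + b' = a'+b'+1 by ring] at IH1
      have IH2 := ih a' (b'+1) (by omega) (by omega) (by omega)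
      rw [show a' + (b'+1) = a'+b'+1 by ring] at IH2
      omega

lemma cA' (a b : ℕ) (hb : 1 ≤ b) (hba : b ≤ a) : c (a+b) + b ≤ c a + c b + a :=
  cA (a+b) a b le_rfl hb hba

def S (a b : ℕ) : Prop := ∃ j : ℕ, b ≤ a ∧ a < b + 2^j ∧ 2^j ≤ 2*b ∧ (2^j ∣ a ∨ 2^j ∣ b)

lemma pd (i x : ℕ) : 2^(i+1) ∣ 2*x ↔ 2^i ∣ x := by
  rw [pow_succ']
  exact Nat.mul_dvd_mul_iff_left (by norm_num : 0 < 2)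

lemma psucc (i : ℕ) : (2:ℕ)^(i+1) = 2*2^i := by rw [pow_succ']

lemma ppos (i : ℕ) : 1 ≤ (2:ℕ)^i := Nat.one_le_two_pow

lemma two_dvd_of_pow (i x : ℕ) (h : 2^(i+1) ∣ x) : 2 ∣ x :=
  dvd_trans (dvd_pow_self 2 (Nat.succ_ne_zero i)) h

/-- carry step: if `2^i ∣ x` and `y = x + 2^i` then `2^(i+1)` divides `x` or `y`. -/
lemma step (i x y : ℕ) (hx : 2^i ∣ x) (hy : y = x + 2^i) :
    2^(i+1) ∣ x ∨ 2^(i+1) ∣ y := by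
  obtain ⟨w, rfl⟩ := hx
  rcases Nat.even_or_odd w with ⟨w', hw⟩ | ⟨w', hw⟩
  · left; exact ⟨w', by rw [psucc, hw]; ring⟩
  · right; exact ⟨w'+1, by rw [hy, psucc, hw]; ring⟩

lemma N1 (a b : ℕ) (hb : 1 ≤ b) (hba : b ≤ a) : S (2*a) (2*b) ↔ S a b := by
  constructor
  · rintro ⟨j, h1, h2, h3, h4⟩
    rcases j with _ | i
    · simp only [pow_zero] at h2 h3
      exact ⟨0, hba, by omega, by omega, Or.inl (by simp)⟩
    · have hp := psucc i
      refine ⟨i, hba, by omega, by omega, ?_⟩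
      rcases h4 with h | h
      · exact Or.inl ((pd i a).mp h)
      · exact Or.inr ((pd i b).mp h)
  · rintro ⟨j, h1, h2, h3, h4⟩
    have hp := psucc j
    refine ⟨j+1, by omega, by omega, by omega, ?_⟩
    rcases h4 with h | h
    · exact Or.inl ((pd j a).mpr h)
    · exact Or.inr ((pd j b).mpr h)

lemma N4 (a b : ℕ) (hb : 1 ≤ b) (hba : b + 1 ≤ a) : ¬ S (2*a+1) (2*b+1) := by
  rintro ⟨j, h1, h2, h3, h4⟩
  rcases j with _ | i
  · simp only [pow_zero] at h2
    omega
  · rcases h4 with h | h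
    · have := two_dvd_of_pow i _ h; omega
    · have := two_dvd_of_pow i _ h; omega

lemma N3 (a b : ℕ) (hb : 1 ≤ b) (hba : b ≤ a) :
    S (2*a+1) (2*b) ↔ (S (a+1) b ∧ S a b) := by
  constructor
  · rintro ⟨j, h1, h2, h3, h4⟩
    rcases j with _ | i
    · simp only [pow_zero] at h2; omega
    have hp := psucc i
    have hdb : 2^i ∣ b := by
      rcases h4 with h | h
      · have := two_dvd_of_pow i _ h; omega
      · exact (pd i b).mp h
    have hib : 2^i ≤ b := Nat.le_of_dvd hb hdb
    have ha2 : a < b + 2^i := by omega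
    refine ⟨?_, ⟨i, hba, ha2, by omega, Or.inr hdb⟩⟩
    rcases Nat.lt_or_ge (a+1) (b + 2^i) with hlt | hge
    · exact ⟨i, by omega, hlt, by omega, Or.inr hdb⟩
    · have heq : a + 1 = b + 2^i := by omega
      have hstep := step i b (a+1) hdb heq
      have hp2 := psucc (i+1)
      exact ⟨i+1, by omega, by omega, by omega, hstep.symm⟩
  · rintro ⟨⟨j1, k1, k2, k3, k4⟩, ⟨j2, l1, l2, l3, l4⟩⟩
    have key : ∃ i : ℕ, 2^i ∣ b ∧ a + 1 ≤ b + 2^i ∧ 2^i ≤ 2*b := by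
      rcases k4 with k | k
      · rcases l4 with l | l
        · -- 2^j1 ∣ a+1, 2^j2 ∣ a
          rcases Nat.eq_or_lt_of_le hba with hab | hab
          · exact ⟨0, one_dvd b, by omega, by omega⟩
          · rcases j1 with _ | i1
            · simp only [pow_zero] at k2; omega
            rcases j2 with _ | i2
            · simp only [pow_zero] at l2; omega
            have d1 := two_dvd_of_pow i1 _ k
            have d2 := two_dvd_of_pow i2 _ l
            omega
        · exact ⟨j2, l, by omega, l3⟩
      · exact ⟨j1, k, by omega, k3⟩
    obtain ⟨i, hd, hle, hb2⟩ := key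
    have hp := psucc i
    exact ⟨i+1, by omega, by omega, by omega, Or.inr ((pd i b).mpr hd)⟩

lemma N2 (a b : ℕ) (hb : 1 ≤ b) (hba : b + 1 ≤ a) :
    S (2*a) (2*b+1) ↔ (S a b ∧ S a (b+1)) := by
  constructor
  · rintro ⟨j, h1, h2, h3, h4⟩
    rcases j with _ | i
    · simp only [pow_zero] at h2; omega
    have hp := psucc i
    have hda : 2^i ∣ a := by
      rcases h4 with h | h
      · exact (pd i a).mp h
      · have := two_dvd_of_pow i _ h; omega
    have hb2 : 2^i ≤ 2*b := by
      rcases i with _ | i'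
      · simp only [pow_zero]; omega
      · have hp2 := psucc i'
        omega
    rcases Nat.lt_or_ge a (b + 2^i) with hlt | hge
    · exact ⟨⟨i, by omega, hlt, hb2, Or.inl hda⟩, ⟨i, by omega, by omega, by omega, Or.inl hda⟩⟩
    · have heq : a = b + 2^i := by omega
      have hdb : 2^i ∣ b := by
        have : 2^i ∣ a - 2^i := Nat.dvd_sub hda (dvd_refl _)
        rwa [show a - 2^i = b by omega] at this
      have hib : 2^i ≤ b := Nat.le_of_dvd hb hdb
      have hstep := step i b a hdb heq
      have hp2 := psucc (i+1)
      constructor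
      · exact ⟨i+1, by omega, by omega, by omega, hstep.symm⟩
      · exact ⟨i, by omega, by omega, by omega, Or.inl hda⟩
  · rintro ⟨⟨j1, k1, k2, k3, k4⟩, ⟨j2, l1, l2, l3, l4⟩⟩
    have key : ∃ i : ℕ, 2^i ∣ a ∧ a ≤ b + 2^i ∧ 2^i ≤ 2*b+1 := by
      rcases k4 with k | k
      · exact ⟨j1, k, by omega, by omega⟩
      · rcases l4 with l | l
        · -- 2^j1 ∣ b, 2^j2 ∣ a
          refine ⟨j2, l, by omega, ?_⟩
          rcases Nat.lt_or_ge (2^j2) (2*b+2) with h | h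
          · omega
          · exfalso
            have h1 : 2^j1 ≤ b := Nat.le_of_dvd hb k
            have h2 : 2^j2 ≤ a := Nat.le_of_dvd (by omega) l
            omega
        · -- 2^j1 ∣ b, 2^j2 ∣ b+1
          rcases j1 with _ | i1
          · simp only [pow_zero] at k2; omega
          rcases j2 with _ | i2
          · simp only [pow_zero] at l2
            exact ⟨0, one_dvd _, by simp only [pow_zero]; omega, by simp only [pow_zero]; omega⟩
          have d1 := two_dvd_of_pow i1 _ k
          have d2 := two_dvd_of_pow i2 _ l
          omega
    obtain ⟨i, hd, hle, hb2⟩ := key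
    have hp := psucc i
    exact ⟨i+1, by omega, by omega, by omega, Or.inl ((pd i a).mpr hd)⟩

lemma S_one (a : ℕ) (ha : 1 ≤ a) : S a 1 ↔ (a = 1 ∨ a = 2) := by
  constructor
  · rintro ⟨j, h1, h2, h3, h4⟩
    rcases j with _ | _ | i
    · simp only [pow_zero] at h2; omega
    · norm_num at h2; omega
    · exfalso
      have : (4:ℕ) ≤ 2^(i+1+1) := by
        calc (4:ℕ) = 2^2 := by norm_num
        _ ≤ 2^(i+1+1) := Nat.pow_le_pow_right (by norm_num) (by omega)
      omega
  · rintro (rfl | rfl)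
    · exact ⟨0, le_rfl, by simp, by simp, Or.inl (one_dvd _)⟩
    · exact ⟨1, by omega, by simp, by simp, Or.inl ⟨1, by norm_num⟩⟩

lemma cB : ∀ N a b : ℕ, a + b ≤ N → 1 ≤ b → b ≤ a →
    (c (a+b) + b = c a + c b + a ↔ S a b) := by
  intro N
  induction N with
  | zero => intro a b h hb hba; omega
  | succ N ih =>
    intro a b hN hb hba
    rcases Nat.eq_or_lt_of_le hb with hb1 | hb2
    · -- b = 1
      have hbeq : b = 1 := hb1.symm
      subst hbeq
      rw [S_one a (by omega), c_one]
      rcases Nat.lt_or_ge a 3 with h3 | h3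
      · rcases Nat.eq_or_lt_of_le hba with h | h
        · rw [← h, show (1:ℕ)+1 = 2*1 by norm_num, c_double, c_one]
          simp
        · have ha2 : a = 2 := by omega
          subst ha2
          have e2 : c 2 = 0 := by rw [show (2:ℕ) = 2*1 by norm_num, c_double, c_one]
          have e1 : c 3 = 1 := by
            rw [show (3:ℕ) = 2*1+1 by norm_num, c_odd 1 le_rfl, c_one, e2]
          rw [show (2:ℕ)+1 = 3 by norm_num, e1, e2]
          norm_num
      · have := cL2 a h3
        constructor
        · intro h; omega
        · intro h; omega
    rcases Nat.eq_or_lt_of_le hba with hab | hab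
    · -- a = b
      subst hab
      rw [show b + b = 2*b by ring, c_double]
      constructor
      · intro _; exact ⟨0, le_rfl, by simp, by omega, Or.inl (one_dvd _)⟩
      · intro _; omega
    -- b ≥ 2, a ≥ b+1
    rcases Nat.even_or_odd a with ⟨a', ha⟩ | ⟨a', ha⟩ <;>
      rcases Nat.even_or_odd b with ⟨b', hbb⟩ | ⟨b', hbb⟩
    · -- a = 2a', b = 2b'
      have ha' : a = 2*a' := by omega
      have hb' : b = 2*b' := by omega
      clear ha hbb; subst ha'; subst hb'
      rw [show 2*a' + 2*b' = 2*(a'+b') by ring, c_double, c_double, c_double,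
        N1 a' b' (by omega) (by omega), ← ih a' b' (by omega) (by omega) (by omega)]
      omega
    · -- a = 2a', b = 2b'+1 : b' ≥ 1, a' ≥ b'+1
      have ha' : a = 2*a' := by omega
      clear ha; subst ha'; subst hbb
      have hb1 : 1 ≤ b' := by omega
      have hab' : b'+1 ≤ a' := by omega
      rw [show 2*a' + (2*b'+1) = 2*(a'+b')+1 by ring, c_odd _ (by omega), c_double,
        c_odd b' hb1, N2 a' b' hb1 hab',
        ← ih a' b' (by omega) (by omega) (by omega),
        ← ih a' (b'+1) (by omega) (by omega) (by omega)]
      have B1 := cA' a' b' (by omega) (by omega)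
      have B2 := cA' a' (b'+1) (by omega) (by omega)
      rw [show a' + (b'+1) = a'+b'+1 by ring] at B2
      rw [show a' + (b'+1) = a'+b'+1 by ring]
      omega
    · -- a = 2a'+1, b = 2b' : b' ≥ 1, a' ≥ b'
      have hb' : b = 2*b' := by omega
      clear hbb; subst ha; subst hb'
      have hb1 : 1 ≤ b' := by omega
      have hab' : b' ≤ a' := by omega
      rw [show 2*a'+1 + 2*b' = 2*(a'+b')+1 by ring, c_odd _ (by omega), c_double,
        c_odd a' (by omega), N3 a' b' hb1 hab',
        ← ih (a'+1) b' (by omega) (by omega) (by omega),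
        ← ih a' b' (by omega) (by omega) (by omega)]
      have B1 := cA' (a'+1) b' (by omega) (by omega)
      have B2 := cA' a' b' (by omega) (by omega)
      rw [show a'+1 + b' = a'+b'+1 by ring] at B1
      rw [show a'+1 + b' = a'+b'+1 by ring]
      omega
    · -- a = 2a'+1, b = 2b'+1 : both odd, a > b
      subst ha; subst hbb
      have hb1 : 1 ≤ b' := by omega
      have hab' : b'+1 ≤ a' := by omega
      have hS := N4 a' b' hb1 hab'
      rw [show 2*a'+1 + (2*b'+1) = 2*(a'+b'+1) by ring, c_double,
        c_odd a' (by omega), c_odd b' hb1]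
      have B1 := cA' (a'+1) b' (by omega) (by omega)
      have B2 := cA' a' (b'+1) (by omega) (by omega)
      rw [show a'+1 + b' = a'+b'+1 by ring] at B1
      rw [show a' + (b'+1) = a'+b'+1 by ring] at B2
      constructor
      · intro h; exfalso; omega
      · intro h; exact absurd h hS

lemma cB' (a b : ℕ) (hb : 1 ≤ b) (hba : b ≤ a) :
    (c (a+b) + b = c a + c b + a ↔ S a b) :=
  cB (a+b) a b le_rfl hb hba

lemma S_final (k t u m : ℕ) (ht : 2*t < 2^k) (htu : t + u = 2^k) (hm : 1 ≤ m) :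
    (S (m+u) m ∧ S (m+u) (m+1)) ↔ ∃ p : ℕ, 1 ≤ p ∧ m = 2^k * p + t := by
  rcases k with _ | k'
  · -- k = 0 : t = 0, u = 1
    simp only [pow_zero] at ht htu ⊢
    have ht0 : t = 0 := by omega
    have hu1 : u = 1 := by omega
    subst ht0; subst hu1
    constructor
    · intro _; exact ⟨m, hm, by omega⟩
    · intro _
      constructor
      · exact ⟨1, by omega, by norm_num, by norm_num; omega, by omega⟩
      · exact ⟨0, by omega, by norm_num, by norm_num; omega, Or.inl (one_dvd _)⟩
  · have hp := psucc k'
    have hu1 : 2^k' + 1 ≤ u := by omega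
    have hppos := ppos k'
    constructor
    · rintro ⟨⟨j1, a1, a2, a3, a4⟩, ⟨j2, b1, b2, b3, b4⟩⟩
      have hj1 : k'+1 ≤ j1 := by
        have h0 : (2:ℕ)^k' < 2^j1 := by omega
        have := (Nat.pow_lt_pow_iff_right (by norm_num : 1 < 2)).mp h0
        omega
      have hj2 : k'+1 ≤ j2 := by
        have h0 : (2:ℕ)^k' < 2^j2 := by omega
        have := (Nat.pow_lt_pow_iff_right (by norm_num : 1 < 2)).mp h0
        omega
      have hk1 : (2:ℕ)^(k'+1) ≤ 2^j1 := Nat.pow_le_pow_right (by norm_num) hj1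
      have hk2 : (2:ℕ)^(k'+1) ≤ 2^j2 := Nat.pow_le_pow_right (by norm_num) hj2
      have hdvd : 2^(k'+1) ∣ (m + u) := by
        rcases a4 with h | h
        · exact dvd_trans (pow_dvd_pow 2 hj1) h
        · rcases b4 with h2 | h2
          · exact dvd_trans (pow_dvd_pow 2 hj2) h2
          · exfalso
            have d1 : 2 ∣ m := dvd_trans (dvd_pow_self 2 (by omega : j1 ≠ 0)) h
            have d2 : 2 ∣ m+1 := dvd_trans (dvd_pow_self 2 (by omega : j2 ≠ 0)) h2
            omega
      obtain ⟨q, hq⟩ := hdvd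
      rcases q with _ | _ | q2
      · simp at hq; omega
      · exfalso
        have hq' : m + u = 2^(k'+1) := by simpa using hq
        omega
      · have hXY : (2:ℕ)^(k'+1)*(q2+1+1) = 2^(k'+1)*(q2+1) + 2^(k'+1) := by ring
        refine ⟨q2+1, by omega, by omega⟩
    · rintro ⟨p, hp1, rfl⟩
      have hXY : (2:ℕ)^(k'+1)*(p+1) = 2^(k'+1)*p + 2^(k'+1) := by ring
      have hmlb : (2:ℕ)^(k'+1) ≤ 2^(k'+1)*p := by
        calc (2:ℕ)^(k'+1) = 2^(k'+1)*1 := by ring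
        _ ≤ 2^(k'+1)*p := Nat.mul_le_mul_left _ hp1
      have hdvdA : 2^(k'+1) ∣ (2^(k'+1)*p + t + u) := ⟨p+1, by omega⟩
      rcases Nat.eq_zero_or_pos t with ht0 | ht1
      · -- t = 0, u = 2^(k'+1)
        subst ht0
        have hdvdm : 2^(k'+1) ∣ 2^(k'+1)*p + 0 := ⟨p, by ring⟩
        constructor
        · refine ⟨k'+1+1, by omega, ?_, ?_, ?_⟩
          · have := psucc (k'+1); omega
          · have := psucc (k'+1); omega
          · have hst := step (k'+1) (2^(k'+1)*p+0) (2^(k'+1)*p+0+u) hdvdm (by omega)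
            exact hst.symm
        · exact ⟨k'+1, by omega, by omega, by omega, Or.inl hdvdA⟩
      · -- t ≥ 1
        constructor
        · exact ⟨k'+1, by omega, by omega, by omega, Or.inl hdvdA⟩
        · exact ⟨k'+1, by omega, by omega, by omega, Or.inl hdvdA⟩

/-- For an odd number `s = 2^(k+1) - (2t + 1)` with `2t < 2^k` and any `m ≥ 0`:
`c (2m + 1 + s) + c (2m + 1) + s = c (4m + 2 + s)` holds if and only if either
`m = 2^k * p + t` for some `p ≥ 1`, or `s = 1` and `m = 0`. -/
theorem c_eq_odd_diff_odd_iff (k t : ℕ) (ht : 2 * t < 2 ^ k) (s : ℕ)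
    (hs : s = 2 ^ (k + 1) - (2 * t + 1)) (m : ℕ) :
    c (2 * m + 1 + s) + c (2 * m + 1) + s = c (4 * m + 2 + s) ↔
      (∃ p : ℕ, 1 ≤ p ∧ m = 2 ^ k * p + t) ∨ (s = 1 ∧ m = 0) := by
  have hppos := ppos k
  have hpk := psucc k
  set u := 2^k - t with hu
  have htu : t + u = 2^k := by omega
  have hu1 : 1 ≤ u := by omega
  have hs' : s + 1 = 2*u := by omega
  rcases Nat.eq_zero_or_pos m with hm0 | hm1
  · subst hm0
    rw [show 2*0+1+s = 2*u by omega, c_double, show 2*0+1 = 1 by norm_num, c_one,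
      show 4*0+2+s = 2*u+1 by omega, c_odd u hu1]
    rcases Nat.eq_or_lt_of_le hu1 with hu2 | hu2
    · -- u = 1
      have hu1' : u = 1 := hu2.symm
      have e2 : c 2 = 0 := by rw [show (2:ℕ) = 2*1 by norm_num, c_double, c_one]
      rw [hu1']
      rw [show (1:ℕ)+1 = 2 by norm_num, c_one, e2]
      constructor
      · intro _; exact Or.inr ⟨by omega, rfl⟩
      · intro _; omega
    · -- u ≥ 2
      have hb := cL1' u (by omega)
      constructor
      · intro h; exfalso; omega
      · rintro (⟨p, hp1, h0⟩ | ⟨hs1, _⟩)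
        · exfalso
          have : (2:ℕ)^k ≤ 2^k*p := by
            calc (2:ℕ)^k = 2^k*1 := by ring
            _ ≤ 2^k*p := Nat.mul_le_mul_left _ hp1
          omega
        · exfalso; omega
  · -- m ≥ 1
    rw [show 2*m+1+s = 2*(m+u) by omega, c_double, c_odd m hm1,
      show 4*m+2+s = 2*(2*m+u)+1 by omega, c_odd (2*m+u) (by omega)]
    have E1 := cB' (m+u) m hm1 (by omega)
    rw [show (m+u)+m = 2*m+u by ring] at E1
    have E2 := cB' (m+u) (m+1) (by omega) (by omega)
    rw [show (m+u)+(m+1) = 2*m+u+1 by ring] at E2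
    have B1 := cA' (m+u) m hm1 (by omega)
    rw [show (m+u)+m = 2*m+u by ring] at B1
    have B2 := cA' (m+u) (m+1) (by omega) (by omega)
    rw [show (m+u)+(m+1) = 2*m+u+1 by ring] at B2
    have F := S_final k t u m ht htu hm1
    constructor
    · intro h
      left
      rw [← F]
      constructor
      · rw [← E1]; omega
      · rw [← E2]; omega
    · rintro (h | h)
      · rw [← F] at h
        have h1 := E1.mpr h.1
        have h2 := E2.mpr h.2
        omega
      · omega
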